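/- No energy-neutral dynamic soaring cycle exists without wind shear: if a solution of the flight dynamics model on an interval [t₀, t_f] with t₀ < t_f has Ẇ(t) = 0, D(t) > 0 and V(t) > 0 for all t ∈ [t₀, t_f], then z(t_f) + V(t_f)^2/(2g) < z(t₀) + V(t₀)^2/(2g); in particular the boundary conditions V(t_f) = V(t₀) and z(t_f) ≥ z(t₀) of a dynamic soaring cycle cannot both hold. -/

import Mathlib

open Real Set

noncomputable def specificEnergy (g : ℝ) (z V : ℝ → ℝ) (t : ℝ) : ℝ :=
  z t + V t ^ 2 / (2 * g)

theorem hasDerivAt_specificEnergy {g : ℝ} {z V : ℝ → ℝ} {z' V' t : ℝ}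
    (hz : HasDerivAt z z' t) (hV : HasDerivAt V V' t) :
    HasDerivAt (specificEnergy g z V) (z' + V t * V' / g) t := by
  refine (hz.add ((hV.fun_pow 2).div_const (2 * g))).congr_deriv ?_
  push_cast
  ring

/-- The work of gravity cancels between the potential and kinetic parts, so only drag and wind
shear change the energy. -/
theorem specificEnergy_rate_eq {m g V D γ ψ W' z' V' : ℝ} (hm : m ≠ 0) (hg : g ≠ 0)
    (hz' : z' = V * sin γ) (hV' : m * V' = -D - m * g * sin γ + m * W' * cos γ * sin ψ) :
    z' + V * V' / g = V * (m * W' * cos γ * sin ψ - D) / (m * g) := by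
  have hV'' : V' = (-D - m * g * sin γ + m * W' * cos γ * sin ψ) / m := by
    rw [← hV']; field_simp
  rw [hz', hV'']
  field_simp
  ring

theorem specificEnergy_strictAntiOn_of_no_wind_shear {m g : ℝ} (hm : 0 < m) (hg : 0 < g)
    {z V γ ψ W D : ℝ → ℝ} {s : Set ℝ} (hs : Convex ℝ s)
    (hz : Differentiable ℝ z) (hV : Differentiable ℝ V)
    (hzdot : ∀ t ∈ s, deriv z t = V t * sin (γ t))
    (hVdot : ∀ t ∈ s, m * deriv V t =
      -D t - m * g * sin (γ t) + m * deriv W t * cos (γ t) * sin (ψ t))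
    (hWdot : ∀ t ∈ s, deriv W t = 0)
    (hD : ∀ t ∈ s, 0 < D t) (hVpos : ∀ t ∈ s, 0 < V t) :
    StrictAntiOn (specificEnergy g z V) s := by
  have hderiv : ∀ t, HasDerivAt (specificEnergy g z V)
      (deriv z t + V t * deriv V t / g) t := fun t =>
    hasDerivAt_specificEnergy (hz t).hasDerivAt (hV t).hasDerivAt
  refine strictAntiOn_of_hasDerivWithinAt_neg hs
    (fun t _ => (hderiv t).continuousAt.continuousWithinAt)
    (fun t _ => (hderiv t).hasDerivWithinAt) fun t ht => ?_
  have ht : t ∈ s := interior_subset ht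
  rw [specificEnergy_rate_eq hm.ne' hg.ne' (hzdot t ht) (hVdot t ht), hWdot t ht]
  have := mul_pos (hVpos t ht) (hD t ht)
  have : 0 < m * g := mul_pos hm hg
  field_simp
  linarith

theorem no_energy_neutral_cycle_without_wind_shear_general
    (m g : ℝ) (hm : 0 < m) (hg : 0 < g)
    (z V γ ψ W D : ℝ → ℝ)
    (hz : Differentiable ℝ z) (hV : Differentiable ℝ V)
    (t₀ t_f : ℝ) (ht : t₀ < t_f)
    (hzdot : ∀ t ∈ Set.Icc t₀ t_f, deriv z t = V t * Real.sin (γ t))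
    (hVdot : ∀ t ∈ Set.Icc t₀ t_f, m * deriv V t =
      -D t - m * g * Real.sin (γ t) + m * deriv W t * Real.cos (γ t) * Real.sin (ψ t))
    (hWdot : ∀ t ∈ Set.Icc t₀ t_f, deriv W t = 0)
    (hD : ∀ t ∈ Set.Icc t₀ t_f, 0 < D t)
    (hVpos : ∀ t ∈ Set.Icc t₀ t_f, 0 < V t) :
    z t_f + (V t_f) ^ 2 / (2 * g) < z t₀ + (V t₀) ^ 2 / (2 * g) ∧
      ¬(V t_f = V t₀ ∧ z t₀ ≤ z t_f) := by
  have hloss : specificEnergy g z V t_f < specificEnergy g z V t₀ :=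
    specificEnergy_strictAntiOn_of_no_wind_shear hm hg (convex_Icc t₀ t_f) hz hV hzdot hVdot
      hWdot hD hVpos (left_mem_Icc.mpr ht.le) (right_mem_Icc.mpr ht.le) ht
  refine ⟨hloss, fun ⟨hVeq, hzle⟩ => ?_⟩
  rw [specificEnergy, specificEnergy, hVeq] at hloss
  linarith

/-- No energy-neutral dynamic soaring cycle exists without wind shear: if on
`[t₀, t_f]` one has `Ẇ = 0`, `D > 0` and `V > 0`, then the specific total energy
strictly decreases over the cycle, so the boundary conditions `V(t_f) = V(t₀)`
and `z(t_f) ≥ z(t₀)` cannot both hold. -/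
theorem no_energy_neutral_cycle_without_wind_shear
    (m g : ℝ) (hm : 0 < m) (hg : 0 < g)
    (z V γ ψ W D : ℝ → ℝ)
    (hz : Differentiable ℝ z) (hV : Differentiable ℝ V)
    (hγ : Differentiable ℝ γ) (hψ : Differentiable ℝ ψ)
    (hW : Differentiable ℝ W)
    (t₀ t_f : ℝ) (ht : t₀ < t_f)
    (hzdot : ∀ t ∈ Set.Icc t₀ t_f, deriv z t = V t * Real.sin (γ t))
    (hVdot : ∀ t ∈ Set.Icc t₀ t_f, m * deriv V t =
      -D t - m * g * Real.sin (γ t) + m * deriv W t * Real.cos (γ t) * Real.sin (ψ t))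
    (hWdot : ∀ t ∈ Set.Icc t₀ t_f, deriv W t = 0)
    (hD : ∀ t ∈ Set.Icc t₀ t_f, 0 < D t)
    (hVpos : ∀ t ∈ Set.Icc t₀ t_f, 0 < V t) :
    z t_f + (V t_f) ^ 2 / (2 * g) < z t₀ + (V t₀) ^ 2 / (2 * g) ∧
      ¬(V t_f = V t₀ ∧ z t₀ ≤ z t_f) :=
  no_energy_neutral_cycle_without_wind_shear_general m g hm hg z V γ ψ W D hz hV t₀ t_f ht hzdot
    hVdot hWdot hD hVpos
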